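/- arXiv:1611.07692 — 5 statements merged into one kernel-verified Lean document; each statement's English description precedes it below -/
import Mathlib

section
/- Let λ > 0 and μ = (1/π) log(1 - e^{-λ}) < 0. Let a_1 < b_1 < a_2 < ... < a_n < b_n be real numbers, and suppose c_1, …, c_n are real numbers with c_k ∈ (b_{k-1}, a_k) (where b_0 = -∞) satisfying (1/π) ∑_{k=1}^n log |(c_j - a_k)/(c_j - b_k)| = μ for each j. Then the polynomial identity e^{πμ} ∏_{k=1}^n (x - b_k) - ∏_{k=1}^n (x - a_k) = (e^{πμ} - 1) ∏_{k=1}^n (x - c_k) holds for all x ∈ ℝ. -/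
/-!
Since `c j ∉ [a k, b k]`, every ratio `(c j - a k) / (c j - b k)` is positive, so the equation
for `c j` says `∏ (c j - a k) = e^{πμ} ∏ (c j - b k)`: the `n` distinct points `c j` are roots of
`e^{πμ} ∏ (X - b k) - ∏ (X - a k)`. This polynomial differs from `(e^{πμ} - 1) ∏ (X - c k)` by a
polynomial of degree `< n` (differences of monic polynomials of degree `n`) vanishing at every
`c j`, so the difference is zero.
-/

open Finset Polynomial Real

namespace Polynomial

variable {R ι : Type*} [CommRing R] [Fintype ι]

theorem degree_prod_X_sub_C_sub_prod_X_sub_C_lt [Nontrivial R] (a b : ι → R) :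
    (∏ k, (X - C (a k)) - ∏ k, (X - C (b k))).degree < (Fintype.card ι : WithBot ℕ) := by
  have ha := monic_prod_X_sub_C a univ
  have hb := monic_prod_X_sub_C b univ
  calc _ < (∏ k, (X - C (a k))).degree := degree_sub_lt_left
        (by rw [degree_eq_natDegree ha.ne_zero, degree_eq_natDegree hb.ne_zero]; simp) ha.ne_zero
        (ha.leadingCoeff.trans hb.leadingCoeff.symm)
    _ = (Fintype.card ι : WithBot ℕ) := by rw [degree_eq_natDegree ha.ne_zero]; simp

theorem mul_prod_sub_prod_eq_sub_one_mul_prod [IsDomain R] {a b c : ι → R} (E : R)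
    (hc : Function.Injective c) (hroot : ∀ j, ∏ k, (c j - a k) = E * ∏ k, (c j - b k))
    (x : R) : E * ∏ k, (x - b k) - ∏ k, (x - a k) = (E - 1) * ∏ k, (x - c k) := by
  have key : E • ∏ k, (X - C (b k)) - ∏ k, (X - C (a k)) = (E - 1) • ∏ k, (X - C (c k)) := by
    refine eq_of_degree_sub_lt_of_eval_index_eq univ hc.injOn ?_ fun j _ => ?_
    · have hsplit : E • ∏ k, (X - C (b k)) - ∏ k, (X - C (a k)) - (E - 1) • ∏ k, (X - C (c k))
          = E • (∏ k, (X - C (b k)) - ∏ k, (X - C (c k)))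
            - (∏ k, (X - C (a k)) - ∏ k, (X - C (c k))) := by
        rw [sub_smul, one_smul, smul_sub]; abel
      rw [hsplit, card_univ]
      exact (degree_sub_le _ _).trans_lt (max_lt
        ((degree_smul_le _ _).trans_lt (degree_prod_X_sub_C_sub_prod_X_sub_C_lt _ _))
        (degree_prod_X_sub_C_sub_prod_X_sub_C_lt _ _))
    · have hcj : ∏ k, (c j - c k) = 0 := prod_eq_zero (mem_univ j) (sub_self _)
      simp [eval_prod, hroot j, hcj]
  simpa [eval_prod] using congrArg (eval x) key

end Polynomial

theorem Fin.strictMono_of_lt_of_val_add_one_eq {α : Type*} [Preorder α] {n : ℕ} {f : Fin n → α}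
    (h : ∀ k l : Fin n, (k : ℕ) + 1 = l → f k < f l) : StrictMono f := by
  cases n with
  | zero => exact fun i => i.elim0
  | succ n => exact Fin.strictMono_iff_lt_succ.2 fun i => h _ _ (by simp)

theorem Fin.notMem_Icc_of_interlacing {α : Type*} [LinearOrder α] {n : ℕ} {a b c : Fin n → α}
    (hc : StrictMono c) (hca : ∀ k, c k < a k)
    (hbc : ∀ k l : Fin n, (k : ℕ) + 1 = l → b k < c l) (j k : Fin n) :
    c j ∉ Set.Icc (a k) (b k) := by
  rw [Set.mem_Icc, not_and_or, not_le, not_le]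
  rcases le_or_gt j k with hjk | hkj
  · exact .inl ((hc.monotone hjk).trans_lt (hca k))
  · have hk : (k : ℕ) + 1 < n := by omega
    exact .inr ((hbc k ⟨k + 1, hk⟩ rfl).trans_le (hc.monotone (Fin.le_def.2 (by simp; omega))))

theorem sub_div_sub_pos_of_notMem_Icc {K : Type*} [Field K] [LinearOrder K]
    [IsStrictOrderedRing K] {a b x : K} (hab : a < b) (hx : x ∉ Set.Icc a b) :
    0 < (x - a) / (x - b) := by
  rw [Set.mem_Icc, not_and_or, not_le, not_le] at hx
  rcases hx with hxa | hbx
  · exact div_pos_of_neg_of_neg (by linarith) (by linarith)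
  · exact div_pos (by linarith) (by linarith)

theorem stmt3_general (mu : ℝ)
    (n : ℕ) (a b c : Fin n → ℝ)
    (hab : ∀ k, a k < b k)
    (hca : ∀ k, c k < a k)
    (hbc : ∀ k l : Fin n, (k : ℕ) + 1 = l → b k < c l)
    (hroot : ∀ j, (1 / π) * ∑ k, Real.log (|(c j - a k) / (c j - b k)|) = mu) :
    ∀ x : ℝ,
      Real.exp (π * mu) * ∏ k, (x - b k) - ∏ k, (x - a k)
        = (Real.exp (π * mu) - 1) * ∏ k, (x - c k) := by
  have hc : StrictMono c := Fin.strictMono_of_lt_of_val_add_one_eq fun k l hkl =>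
    (hca k).trans ((hab k).trans (hbc k l hkl))
  have hpos : ∀ j k, 0 < (c j - a k) / (c j - b k) := fun j k =>
    sub_div_sub_pos_of_notMem_Icc (hab k) (Fin.notMem_Icc_of_interlacing hc hca hbc j k)
  have hprod : ∀ j, ∏ k, (c j - a k) = Real.exp (π * mu) * ∏ k, (c j - b k) := by
    intro j
    have hb : ∏ k, (c j - b k) ≠ 0 :=
      prod_ne_zero_iff.2 fun k _ hk => (hpos j k).ne' (by rw [hk, div_zero])
    have hratio_pos : 0 < ∏ k, (c j - a k) / (c j - b k) := prod_pos fun k _ => hpos j k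
    have hratio : ∏ k, (c j - a k) / (c j - b k) = Real.exp (π * mu) := by
      rw [← hroot j, one_div, ← mul_assoc, mul_inv_cancel₀ pi_ne_zero, one_mul,
        ← Real.log_prod fun k _ => (abs_pos.2 (hpos j k).ne').ne', ← abs_prod,
        Real.exp_log (abs_pos.2 hratio_pos.ne'), abs_of_pos hratio_pos]
    rwa [prod_div_distrib, div_eq_iff hb] at hratio
  exact mul_prod_sub_prod_eq_sub_one_mul_prod _ hc.injective hprod

/-- With `λ > 0`, `μ = (1/π) log(1 - e^{-λ})`, interlaced points
`a_1 < b_1 < ... < a_n < b_n` and `c_k ∈ (b_{k-1}, a_k)` (`b_0 = -∞`) which are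
roots of `(1/π) ∑ log |(x - a_k)/(x - b_k)| = μ`, the polynomial identity
`e^{πμ} ∏ (x - b_k) - ∏ (x - a_k) = (e^{πμ} - 1) ∏ (x - c_k)` holds. -/
theorem stmt3 (lam mu : ℝ) (hlam : 0 < lam)
    (hmu : mu = (1 / π) * Real.log (1 - Real.exp (-lam)))
    (n : ℕ) (a b c : Fin n → ℝ)
    (hab : ∀ k, a k < b k)
    (hba : ∀ k l : Fin n, (k : ℕ) + 1 = l → b k < a l)
    (hca : ∀ k, c k < a k)
    (hbc : ∀ k l : Fin n, (k : ℕ) + 1 = l → b k < c l)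
    (hroot : ∀ j, (1 / π) * ∑ k, Real.log (|(c j - a k) / (c j - b k)|) = mu) :
    ∀ x : ℝ,
      Real.exp (π * mu) * ∏ k, (x - b k) - ∏ k, (x - a k)
        = (Real.exp (π * mu) - 1) * ∏ k, (x - c k) :=
  stmt3_general mu n a b c hab hca hbc hroot
end

section
/- Let λ > 0, μ = (1/π) log(1 - e^{-λ}), and let a_1 < b_1 < ... < a_n < b_n, c_1 < ... < c_n with c_k ∈ (b_{k-1}, a_k) (b_0 = -∞) satisfy e^{πμ} ∏_{k=1}^n (x - b_k) - ∏_{k=1}^n (x - a_k) = (e^{πμ} - 1) ∏_{k=1}^n (x - c_k) for all x. Then for each j, ∑_{k=1}^n log |(b_j - c_k)/(b_j - a_k)| = λ, i.e. H𝟙_E(b_j) = λ/π·π = λ where E = ⋃_{k=1}^n (c_k, a_k). -/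
open MeasureTheory Filter Set Real

/-!
Evaluating the polynomial identity at `x = b j` kills the `b`-product, leaving
`∏ (b j - a k) = e^{-λ} ∏ (b j - c k)` because `e^{πμ} = 1 - e^{-λ}`. The interlacing of the
points keeps `b j` away from every `a k` and `c k`, so taking `log |·|` of the ratio gives `λ`.
-/

section Interlacing

variable {α : Type*} [Preorder α] {n : ℕ} {a b : Fin n → α}

theorem Fin.lt_of_interlacing (hab : ∀ k, a k ≤ b k)
    (hba : ∀ k l : Fin n, (k : ℕ) + 1 = l → b k < a l) {k l : Fin n} (hkl : k < l) :
    b k < a l := by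
  obtain ⟨m, hm⟩ : ∃ m, (l : ℕ) = k + 1 + m := Nat.exists_eq_add_of_le hkl
  induction m generalizing l with
  | zero => exact hba k l hm.symm
  | succ m ih =>
    let p : Fin n := ⟨k + 1 + m, by omega⟩
    have hkp : b k < a p := ih (Fin.lt_def.mpr (by simp only [p]; omega)) rfl
    exact hkp.trans_le ((hab p).trans (hba p l (by simp only [p]; omega)).le)

theorem Fin.lt_of_interlacing_of_le (hab : ∀ k, a k < b k)
    (hba : ∀ k l : Fin n, (k : ℕ) + 1 = l → b k < a l) {k l : Fin n} (hkl : k ≤ l) :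
    a k < b l := by
  rcases hkl.eq_or_lt with rfl | hlt
  · exact hab k
  · exact (hab k).trans ((Fin.lt_of_interlacing (fun k => (hab k).le) hba hlt).trans (hab l))

end Interlacing

theorem Real.sum_log_abs_div {ι : Type*} {s : Finset ι} {f g : ι → ℝ}
    (hf : ∀ k ∈ s, f k ≠ 0) (hg : ∀ k ∈ s, g k ≠ 0) :
    ∑ k ∈ s, log |f k / g k| = log |(∏ k ∈ s, f k) / ∏ k ∈ s, g k| := by
  rw [← Finset.prod_div_distrib, Finset.abs_prod, log_prod]
  intro k hk
  simp [hf k hk, hg k hk]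

/-- Under the polynomial identity and the interlacing conditions,
for each `j` one has `∑ k, log |(b j - c k)/(b j - a k)| = λ`, i.e. the Hilbert
transform of the indicator of `E = ⋃ (c_k, a_k)` equals `λ/π·π = λ` at `b j`
(up to the factor `1/π`, the sum of logarithms equals `πλ`; here stated as
`∑ log |(b j - c k)/(b j - a k)| = λ` following the paper's normalization). -/
theorem stmt5 (lam mu : ℝ) (hlam : 0 < lam)
    (hmu : mu = (1 / π) * Real.log (1 - Real.exp (-lam)))
    (n : ℕ) (a b c : Fin n → ℝ)
    (hab : ∀ k, a k < b k)
    (hba : ∀ k l : Fin n, (k : ℕ) + 1 = l → b k < a l)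
    (hca : ∀ k, c k < a k)
    (hbc : ∀ k l : Fin n, (k : ℕ) + 1 = l → b k < c l)
    (hid : ∀ x : ℝ,
      Real.exp (π * mu) * ∏ k, (x - b k) - ∏ k, (x - a k)
        = (Real.exp (π * mu) - 1) * ∏ k, (x - c k)) :
    ∀ j : Fin n,
      ∑ k, Real.log (|(b j - c k) / (b j - a k)|) = lam := by
  intro j
  have hexp : exp (π * mu) = 1 - exp (-lam) := by
    have hpos : 0 < 1 - exp (-lam) := sub_pos.mpr (Real.exp_lt_one_iff.mpr (neg_neg_of_pos hlam))
    rw [hmu, ← mul_assoc, mul_one_div_cancel pi_ne_zero, one_mul, exp_log hpos]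
  have hprod : ∏ k, (b j - a k) = exp (-lam) * ∏ k, (b j - c k) := by
    have h := hid (b j)
    rw [Finset.prod_eq_zero (Finset.mem_univ j) (sub_self _), mul_zero, hexp] at h
    linarith
  have ha : ∀ k ∈ Finset.univ, b j - a k ≠ 0 := fun k _ => by
    rcases le_or_gt k j with hkj | hjk
    · exact sub_ne_zero.mpr (Fin.lt_of_interlacing_of_le hab hba hkj).ne'
    · exact sub_ne_zero.mpr (Fin.lt_of_interlacing (fun k => (hab k).le) hba hjk).ne
  have hc : ∀ k ∈ Finset.univ, b j - c k ≠ 0 := fun k _ => by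
    rcases le_or_gt k j with hkj | hjk
    · exact sub_ne_zero.mpr ((hca k).trans (Fin.lt_of_interlacing_of_le hab hba hkj)).ne'
    · exact sub_ne_zero.mpr
        (Fin.lt_of_interlacing (fun k => ((hca k).trans (hab k)).le) hbc hjk).ne
  have hc0 : ∏ k, (b j - c k) ≠ 0 := Finset.prod_ne_zero_iff.mpr hc
  rw [Real.sum_log_abs_div hc ha, hprod, div_mul_cancel_right₀ hc0, ← exp_neg, neg_neg,
    abs_of_pos (exp_pos lam), log_exp]
end

section
/- Let G ⊂ ℝ be open with Whitney-type partition {I_k} (intervals satisfying dist(I_k, Gᶜ) = |I_k| and G = ⋃ I_k), and let F ⊂ G be a measurable set such that |F ∩ I_j| ≤ πγ|I_j|/2^{j+2} for all j, where γ > 0. Then for every x ∈ ℝ \ G, the absolute value of the Hilbert transform |H𝟙_F(x)| ≤ (1/π) ∑_j |F ∩ I_j| / dist(x, I_j) < γ. -/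
open MeasureTheory Set Real

/-!
Every point of `Gᶜ` lies at distance at least `|I j|` from `I j`, so on `F ∩ I j` the kernel
`1 / (x - t)` is bounded by `1 / |I j|`, and the hypothesis on `|F ∩ I j|` makes the `j`-th
piece of the integral at most `π γ / 2 ^ (j + 2)`. Summing the geometric series bounds the
whole sum by `π γ / 2`.
-/

lemma sInf_image2_abs_sub_le_infDist {A B : Set ℝ} {x : ℝ} (hx : x ∈ B) :
    sInf (image2 (fun t y => |t - y|) A B) ≤ Metric.infDist x A := by
  rcases A.eq_empty_or_nonempty with rfl | hA
  · simp
  refine (Metric.le_infDist hA).2 fun t ht => ?_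
  have hbdd : BddBelow (image2 (fun t y => |t - y|) A B) := by
    refine ⟨0, ?_⟩
    rintro _ ⟨_, _, _, _, rfl⟩
    exact abs_nonneg _
  rw [Real.dist_eq, abs_sub_comm]
  exact csInf_le hbdd (mem_image2_of_mem ht hx)

lemma toReal_div_le_of_le_ofReal_mul {m : ENNReal} {c ℓ d : ℝ} (hc : 0 ≤ c) (hℓ : 0 < ℓ)
    (hℓd : ℓ ≤ d) (hm : m ≤ ENNReal.ofReal (c * ℓ)) : m.toReal / d ≤ c := by
  refine div_le_of_le_mul₀ (hℓ.le.trans hℓd) hc ?_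
  calc m.toReal ≤ c * ℓ := ENNReal.toReal_le_of_le_ofReal (by positivity) hm
    _ ≤ c * d := mul_le_mul_of_nonneg_left hℓd hc

lemma summable_and_tsum_le_of_le_div_two_pow {f : ℕ → ℝ} {c : ℝ} (hf0 : ∀ j, 0 ≤ f j)
    (hf : ∀ j, f j ≤ c / 2 ^ (j + 2)) : Summable f ∧ ∑' j, f j ≤ c / 2 := by
  have hgeom : HasSum (fun j : ℕ => c / 2 ^ (j + 2)) (c / 2) := by
    convert hasSum_geometric_two' (c / 2) using 2 with j
    ring
  have hsum : Summable f := hgeom.summable.of_nonneg_of_le hf0 hf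
  exact ⟨hsum, hasSum_le hf hsum.hasSum hgeom⟩

lemma norm_setIntegral_le_tsum_of_subset_iUnion {α ι E : Type*} [MeasurableSpace α]
    [Countable ι] [NormedAddCommGroup E] [NormedSpace ℝ E] {μ : Measure α} {f : α → E}
    {F : Set α} {s : ι → Set α} {C : ι → ℝ} (hF : F ⊆ ⋃ j, s j) (hC0 : ∀ j, 0 ≤ C j)
    (hC : ∀ j, ∀ t ∈ F ∩ s j, ‖f t‖ ≤ C j) (hμ : ∀ j, μ (F ∩ s j) ≠ ⊤)
    (hsum : Summable fun j => (μ (F ∩ s j)).toReal * C j) :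
    ‖∫ t in F, f t ∂μ‖ ≤ ∑' j, (μ (F ∩ s j)).toReal * C j := by
  have hpiece : ∀ j, ∫⁻ t in F ∩ s j, ENNReal.ofReal ‖f t‖ ∂μ
      ≤ ENNReal.ofReal ((μ (F ∩ s j)).toReal * C j) := fun j =>
    calc ∫⁻ t in F ∩ s j, ENNReal.ofReal ‖f t‖ ∂μ
        ≤ ∫⁻ _ in F ∩ s j, ENNReal.ofReal (C j) ∂μ :=
          setLIntegral_mono measurable_const fun t ht => ENNReal.ofReal_le_ofReal (hC j t ht)
      _ = ENNReal.ofReal ((μ (F ∩ s j)).toReal * C j) := by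
          rw [setLIntegral_const, ENNReal.ofReal_mul ENNReal.toReal_nonneg,
            ENNReal.ofReal_toReal (hμ j), mul_comm]
  have hF' : F ⊆ ⋃ j, F ∩ s j := fun t ht => by
    obtain ⟨j, hj⟩ := mem_iUnion.1 (hF ht)
    exact mem_iUnion.2 ⟨j, ht, hj⟩
  have hnonneg : ∀ j, 0 ≤ (μ (F ∩ s j)).toReal * C j := fun j =>
    mul_nonneg ENNReal.toReal_nonneg (hC0 j)
  refine (norm_integral_le_lintegral_norm _).trans
    (ENNReal.toReal_le_of_le_ofReal (tsum_nonneg hnonneg) ?_)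
  calc ∫⁻ t in F, ENNReal.ofReal ‖f t‖ ∂μ
      ≤ ∫⁻ t in ⋃ j, F ∩ s j, ENNReal.ofReal ‖f t‖ ∂μ := lintegral_mono_set hF'
    _ ≤ ∑' j, ∫⁻ t in F ∩ s j, ENNReal.ofReal ‖f t‖ ∂μ := lintegral_iUnion_le _ _
    _ ≤ ∑' j, ENNReal.ofReal ((μ (F ∩ s j)).toReal * C j) := ENNReal.tsum_le_tsum hpiece
    _ = ENNReal.ofReal (∑' j, (μ (F ∩ s j)).toReal * C j) :=
        (ENNReal.ofReal_tsum_of_nonneg hnonneg hsum).symm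

theorem stmt8_general (G : Set ℝ) (p q : ℕ → ℝ)
    (hpq : ∀ k, p k < q k)
    (hGU : G = ⋃ k, Ico (p k) (q k))
    (hWhitney : ∀ k,
      sInf (Set.image2 (fun t y => |t - y|) (Ico (p k) (q k)) Gᶜ) = q k - p k)
    (F : Set ℝ) (hFG : F ⊆ G)
    (γ : ℝ) (hγ : 0 < γ)
    (hsmall : ∀ j, volume (F ∩ Ico (p j) (q j))
        ≤ ENNReal.ofReal (π * γ * (q j - p j) / 2 ^ (j + 2))) :
    ∀ x ∉ G,
      |(1 / π) * ∫ t in F, 1 / (x - t)|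
          ≤ (1 / π) * ∑' j : ℕ,
              (volume (F ∩ Ico (p j) (q j))).toReal
                / Metric.infDist x (Ico (p j) (q j)) ∧
      (1 / π) * ∑' j : ℕ,
          (volume (F ∩ Ico (p j) (q j))).toReal
            / Metric.infDist x (Ico (p j) (q j)) < γ := by
  intro x hx
  have hlen : ∀ j, q j - p j ≤ Metric.infDist x (Ico (p j) (q j)) := fun j =>
    hWhitney j ▸ sInf_image2_abs_sub_le_infDist hx
  have hdist_pos : ∀ j, 0 < Metric.infDist x (Ico (p j) (q j)) := fun j =>
    (sub_pos.2 (hpq j)).trans_le (hlen j)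
  have hterm : ∀ j, (volume (F ∩ Ico (p j) (q j))).toReal / Metric.infDist x (Ico (p j) (q j))
      ≤ π * γ / 2 ^ (j + 2) := fun j =>
    toReal_div_le_of_le_ofReal_mul (by positivity) (sub_pos.2 (hpq j)) (hlen j)
      (by convert hsmall j using 2; ring)
  obtain ⟨hsum, hS⟩ := summable_and_tsum_le_of_le_div_two_pow
    (fun j => div_nonneg ENNReal.toReal_nonneg (hdist_pos j).le) hterm
  have hkernel : ∀ j, ∀ t ∈ F ∩ Ico (p j) (q j),
      ‖1 / (x - t)‖ ≤ (Metric.infDist x (Ico (p j) (q j)))⁻¹ := fun j t ht => by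
    rw [norm_div, norm_one, one_div, Real.norm_eq_abs, ← Real.dist_eq]
    exact inv_anti₀ (hdist_pos j) (Metric.infDist_le_dist_of_mem ht.2)
  have hintegral := norm_setIntegral_le_tsum_of_subset_iUnion (μ := volume) (hGU ▸ hFG)
    (fun j => inv_nonneg.2 (hdist_pos j).le) hkernel
    (fun j => ne_top_of_le_ne_top ENNReal.ofReal_ne_top (hsmall j))
    (by simpa only [div_eq_mul_inv] using hsum)
  refine ⟨?_, ?_⟩
  · rw [abs_mul, abs_of_pos (by positivity : (0 : ℝ) < 1 / π), ← Real.norm_eq_abs]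
    gcongr
    simpa only [div_eq_mul_inv] using hintegral
  · calc (1 / π) * ∑' j,
          (volume (F ∩ Ico (p j) (q j))).toReal / Metric.infDist x (Ico (p j) (q j))
        ≤ (1 / π) * (π * γ / 2) := by gcongr
      _ = γ / 2 := by field_simp
      _ < γ := by linarith

/-- Let `G ⊂ ℝ` be open with a Whitney-type partition by intervals
`I k = [p k, q k)` satisfying `G = ⋃ I k` and `dist(I k, Gᶜ) = |I k|`. If
`F ⊆ G` is measurable with `|F ∩ I j| ≤ π γ |I j| / 2^{j+2}` for all `j`
(`γ > 0`), then for every `x ∉ G`,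
`|H𝟙_F(x)| ≤ (1/π) ∑ |F ∩ I j| / dist(x, I j) < γ`,
where `H𝟙_F(x) = (1/π) ∫_F dt/(x - t)`. -/
theorem stmt8 (G : Set ℝ) (hG : IsOpen G) (p q : ℕ → ℝ)
    (hpq : ∀ k, p k < q k)
    (hGU : G = ⋃ k, Ico (p k) (q k))
    (hWhitney : ∀ k,
      sInf (Set.image2 (fun t y => |t - y|) (Ico (p k) (q k)) Gᶜ) = q k - p k)
    (F : Set ℝ) (hFG : F ⊆ G) (hFm : MeasurableSet F)
    (γ : ℝ) (hγ : 0 < γ)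
    (hsmall : ∀ j, volume (F ∩ Ico (p j) (q j))
        ≤ ENNReal.ofReal (π * γ * (q j - p j) / 2 ^ (j + 2))) :
    ∀ x ∉ G,
      |(1 / π) * ∫ t in F, 1 / (x - t)|
          ≤ (1 / π) * ∑' j : ℕ,
              (volume (F ∩ Ico (p j) (q j))).toReal
                / Metric.infDist x (Ico (p j) (q j)) ∧
      (1 / π) * ∑' j : ℕ,
          (volume (F ∩ Ico (p j) (q j))).toReal
            / Metric.infDist x (Ico (p j) (q j)) < γ :=
  stmt8_general G p q hpq hGU hWhitney F hFG γ hγ hsmall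
end

section
/- Let φ be the continuous function supported on [-1,1] with φ(x) = 1 - x on [0,1], φ(-2^{-k}) = 1 - 1/(k+1), linear on each [-2^{-k}, -2^{-k-1}], and zero outside [-1,1]. Then the maximal Hilbert transform of φ at 0 is infinite: sup_{ε>0} |(1/π) ∫_{|t|>ε} φ(t)/(-t) dt| = ∞. In particular, for ε = 2^{-n}, the truncated Hilbert transform H_{2^{-n}} φ(0) ≤ -(log 2) ∑_{k=1}^n 1/(k+1) + 1, which tends to -∞. -/
open MeasureTheory Filter Set Real

/-- The function `φ`: `φ(x) = 1 - x` on `[0,1]`, `φ = 0` outside `[-1,1]`,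
`φ(-2^{-k}) = 1 - 1/(k+1)` and `φ` linear on each `[-2^{-k}, -2^{-k-1}]`. -/
noncomputable def phi (x : ℝ) : ℝ :=
  if x < -1 ∨ 1 < x then 0
  else if 0 ≤ x then 1 - x
  else
    let k : ℕ := ⌊-Real.logb 2 (-x)⌋₊
    (1 - 1 / ((k : ℝ) + 1)) +
      (x + 2 ^ (-(k : ℝ))) * 2 ^ ((k : ℝ) + 1) *
        ((1 - 1 / ((k : ℝ) + 2)) - (1 - 1 / ((k : ℝ) + 1)))

/-!
On `[2^{-n}, 1]` the integrand `φ(t)/(-t)` equals `1 - 1/t`, whose integral is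
`1 - 2^{-n} - n log 2`. On `[-2^{-k}, -2^{-k-1}]` the function `φ` interpolates linearly between
`1 - 1/(k+1)` and `1 - 1/(k+2)`, so it is at most `1 - 1/(k+2)` there, and the integrand
contributes at most `(1 - 1/(k+2)) log 2`. Summing over `k < n`, the terms `n log 2` cancel and
what remains is `1 - (log 2) ∑_{k=1}^n 1/(k+1)`, which tends to `-∞` like the harmonic series.
-/

lemma floor_neg_logb_eq_of_mem_Ioc {b s : ℝ} {k : ℕ} (hb : 1 < b)
    (hs : s ∈ Ioc (b ^ (k + 1))⁻¹ (b ^ k)⁻¹) : ⌊-logb b s⌋₊ = k := by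
  have hs₀ : 0 < s := lt_trans (by positivity) hs.1
  have hk : (k : ℝ) ≤ -logb b s := by
    rw [le_neg, logb_le_iff_le_rpow hb hs₀, rpow_neg (by positivity), rpow_natCast]
    exact hs.2
  rw [Nat.floor_eq_iff ((Nat.cast_nonneg k).trans hk)]
  refine ⟨hk, ?_⟩
  rw [neg_lt, lt_logb_iff_rpow_lt hb hs₀, rpow_neg (by positivity)]
  exact_mod_cast hs.1

lemma inv_two_pow_le_one (n : ℕ) : ((2 : ℝ) ^ n)⁻¹ ≤ 1 :=
  inv_le_one_of_one_le₀ (one_le_pow₀ one_le_two)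

lemma tendsto_sum_Icc_one_div_succ_atTop :
    Tendsto (fun n : ℕ => ∑ k ∈ Finset.Icc 1 n, (1 : ℝ) / (k + 1)) atTop atTop := by
  have hshift (n : ℕ) : ∑ k ∈ Finset.Icc 1 n, (1 : ℝ) / (k + 1)
      = ∑ k ∈ Finset.range (n + 1), (1 : ℝ) / (k + 1) - 1 := by
    rw [Finset.sum_range_succ', ← Finset.Ico_add_one_right_eq_Icc, Finset.sum_Ico_eq_sum_range]
    simp [add_comm]
  simp only [hshift]
  exact tendsto_atTop_add_const_right _ _ <|
    tendsto_sum_range_one_div_nat_succ_atTop.comp (tendsto_add_atTop_nat 1)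

lemma setIntegral_lt_abs_eq_intervalIntegral_add {E : Type*} [NormedAddCommGroup E]
    [NormedSpace ℝ E] {f : ℝ → E} {ε R : ℝ} (hε : 0 ≤ ε) (hεR : ε ≤ R)
    (hf : ∀ t, R < |t| → f t = 0)
    (h₁ : IntervalIntegrable f volume (-R) (-ε)) (h₂ : IntervalIntegrable f volume ε R) :
    ∫ t in {t | ε < |t|}, f t = (∫ t in (-R)..(-ε), f t) + ∫ t in ε..R, f t := by
  have hset : {t : ℝ | ε < |t|} ∩ Icc (-R) R = Ico (-R) (-ε) ∪ Ioc ε R := by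
    ext t
    simp only [mem_inter_iff, mem_ofPred_eq, lt_abs, mem_Icc, mem_union, mem_Ico, mem_Ioc]
    constructor
    · rintro ⟨h | h, h₁, h₂⟩
      · exact Or.inr ⟨h, h₂⟩
      · exact Or.inl ⟨h₁, by linarith⟩
    · rintro (⟨h₁, h₂⟩ | ⟨h₁, h₂⟩)
      · exact ⟨Or.inr (by linarith), h₁, by linarith⟩
      · exact ⟨Or.inl h₁, by linarith, h₂⟩
  have houtside : ∀ t ∈ {t : ℝ | ε < |t|} \ ({t | ε < |t|} ∩ Icc (-R) R), f t = 0 := by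
    rintro t ⟨ht, hnot⟩
    exact hf t (lt_of_not_ge fun h => hnot ⟨ht, abs_le.mp h⟩)
  rw [setIntegral_eq_of_subset_of_forall_sdiff_eq_zero
      (measurableSet_lt measurable_const continuous_abs.measurable) inter_subset_left houtside,
    hset, setIntegral_congr_set
      ((Ico_ae_eq_Ioc (μ := volume) (a := -R) (b := -ε)).union (EventuallyEq.refl _ (Ioc ε R))),
    setIntegral_union (Ioc_disjoint_Ioc_of_le (by linarith)) measurableSet_Ioc h₁.1 h₂.1,
    intervalIntegral.integral_of_le (by linarith), intervalIntegral.integral_of_le hεR]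

lemma iSup_pos_ofReal_abs_eq_top_of_tendsto_atBot {g : ℝ → ℝ} {ε : ℕ → ℝ}
    (hε : ∀ n, 0 < ε n) (hg : Tendsto (fun n => g (ε n)) atTop atBot) :
    ⨆ (x : ℝ) (_ : 0 < x), ENNReal.ofReal |g x| = ⊤ :=
  top_le_iff.mp <| le_of_tendsto' (ENNReal.tendsto_ofReal_atTop.comp
    (tendsto_abs_atBot_atTop.comp hg)) fun n => le_iSup₂_of_le (ε n) (hε n) le_rfl

/-- `phiNode k = φ(-2^{-k})`. -/
noncomputable def phiNode (k : ℕ) : ℝ := 1 - 1 / ((k : ℝ) + 1)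

noncomputable def phiPiece (k : ℕ) (t : ℝ) : ℝ :=
  phiNode k + (t + (2 ^ k)⁻¹) * 2 ^ (k + 1) * (phiNode (k + 1) - phiNode k)

noncomputable def hilbertIntegrand (t : ℝ) : ℝ := phi t / (0 - t)

lemma phi_eq_zero_of_one_lt_abs {t : ℝ} (ht : 1 < |t|) : phi t = 0 := by
  rw [phi, if_pos ((lt_abs.mp ht).symm.imp_left fun h => by linarith)]

lemma phi_eq_of_mem_Icc {t : ℝ} (ht : t ∈ Icc 0 1) : phi t = 1 - t := by
  unfold phi
  rw [if_neg (by rw [not_or, not_lt, not_lt]; constructor <;> linarith [ht.1, ht.2]), if_pos ht.1]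

lemma phi_eq_phiPiece {k : ℕ} {t : ℝ} (ht : t ∈ Ico (-(2 ^ k)⁻¹) (-(2 ^ (k + 1))⁻¹)) :
    phi t = phiPiece k t := by
  have hfloor : ⌊-logb 2 (-t)⌋₊ = k :=
    floor_neg_logb_eq_of_mem_Ioc one_lt_two ⟨by linarith [ht.2], by linarith [ht.1]⟩
  have h₁ : ((2 : ℝ) ^ k)⁻¹ ≤ 1 := inv_two_pow_le_one k
  have h₂ : 0 < ((2 : ℝ) ^ (k + 1))⁻¹ := by positivity
  unfold phi phiPiece phiNode
  rw [if_neg (by rw [not_or, not_lt, not_lt]; constructor <;> linarith [ht.1, ht.2]),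
    if_neg (by linarith [ht.2])]
  simp only [hfloor, rpow_neg zero_le_two, rpow_natCast, rpow_add_one two_ne_zero, pow_succ]
  push_cast
  ring

lemma phiPiece_left (k : ℕ) : phiPiece k (-(2 ^ k)⁻¹) = phiNode k := by
  simp [phiPiece]

lemma phiPiece_right (k : ℕ) : phiPiece k (-(2 ^ (k + 1))⁻¹) = phiNode (k + 1) := by
  unfold phiPiece
  field_simp
  ring

lemma eqOn_phi_phiPiece (k : ℕ) :
    EqOn phi (phiPiece k) (Icc (-(2 ^ k)⁻¹) (-(2 ^ (k + 1))⁻¹)) := by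
  intro t ht
  rcases ht.2.lt_or_eq with hlt | rfl
  · exact phi_eq_phiPiece ⟨ht.1, hlt⟩
  · rw [phi_eq_phiPiece (k := k + 1) ⟨le_rfl, ?_⟩, phiPiece_left, phiPiece_right]
    gcongr <;> norm_num

lemma phiNode_le_succ (k : ℕ) : phiNode k ≤ phiNode (k + 1) := by
  unfold phiNode
  gcongr
  linarith

lemma phiPiece_le_phiNode_succ {k : ℕ} {t : ℝ}
    (ht : t ∈ Icc (-(2 ^ k)⁻¹) (-(2 ^ (k + 1))⁻¹)) : phiPiece k t ≤ phiNode (k + 1) := by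
  have hslope : (t + (2 ^ k)⁻¹) * 2 ^ (k + 1) ≤ 1 := by
    have : t + (2 ^ k)⁻¹ ≤ (2 ^ (k + 1))⁻¹ := by
      have := ht.2
      rw [pow_succ, mul_inv] at this ⊢
      linarith
    calc (t + (2 ^ k)⁻¹) * 2 ^ (k + 1) ≤ (2 ^ (k + 1))⁻¹ * 2 ^ (k + 1) := by gcongr
      _ = 1 := inv_mul_cancel₀ (by positivity)
  have := phiNode_le_succ k
  unfold phiPiece
  nlinarith

lemma sum_range_phiNode_succ (n : ℕ) :
    ∑ k ∈ Finset.range n, phiNode (k + 1)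
      = n - ∑ k ∈ Finset.Icc 1 n, (1 : ℝ) / (k + 1) := by
  rw [← Finset.Ico_add_one_right_eq_Icc, Finset.sum_Ico_eq_sum_range]
  simp [phiNode, Finset.sum_sub_distrib, add_comm]

lemma continuousOn_hilbertIntegrand_piece (k : ℕ) :
    ContinuousOn hilbertIntegrand (Icc (-(2 ^ k)⁻¹) (-(2 ^ (k + 1))⁻¹)) := by
  refine ContinuousOn.div ?_ (by fun_prop) fun t ht => ?_
  · exact ContinuousOn.congr (by unfold phiPiece; fun_prop) (eqOn_phi_phiPiece k)
  · have : t < 0 := ht.2.trans_lt (by simp)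
    linarith

lemma intervalIntegrable_hilbertIntegrand_piece (k : ℕ) :
    IntervalIntegrable hilbertIntegrand volume (-(2 ^ k)⁻¹) (-(2 ^ (k + 1))⁻¹) :=
  (continuousOn_hilbertIntegrand_piece k).intervalIntegrable_of_Icc (by gcongr <;> norm_num)

lemma integral_hilbertIntegrand_piece_le (k : ℕ) :
    ∫ t in (-(2 ^ k)⁻¹)..(-(2 ^ (k + 1))⁻¹), hilbertIntegrand t
      ≤ phiNode (k + 1) * log 2 := by
  have hab : -((2 : ℝ) ^ k)⁻¹ ≤ -(2 ^ (k + 1))⁻¹ := by gcongr <;> norm_num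
  have hb : -((2 : ℝ) ^ (k + 1))⁻¹ < 0 := by simp
  have h0 : (0 : ℝ) ∉ uIcc (-(2 ^ k)⁻¹) (-(2 ^ (k + 1))⁻¹) := by
    rw [uIcc_of_le hab]
    exact fun h => hb.not_ge h.2
  calc ∫ t in (-(2 ^ k)⁻¹)..(-(2 ^ (k + 1))⁻¹), hilbertIntegrand t
      ≤ ∫ t in (-(2 ^ k)⁻¹)..(-(2 ^ (k + 1))⁻¹), -phiNode (k + 1) * t⁻¹ := by
        refine intervalIntegral.integral_mono_on hab (intervalIntegrable_hilbertIntegrand_piece k)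
          (by apply ContinuousOn.intervalIntegrable
              fun_prop (disch := exact fun t ht h => h0 (h ▸ ht)))
          fun t ht => ?_
        rw [hilbertIntegrand, eqOn_phi_phiPiece k ht, neg_mul, ← div_eq_mul_inv, zero_sub,
          div_neg, neg_le_neg_iff]
        exact div_le_div_of_nonpos_of_le (ht.2.trans hb.le) (phiPiece_le_phiNode_succ ht)
    _ = phiNode (k + 1) * log 2 := by
        have hratio : ((2 : ℝ) ^ (k + 1))⁻¹ / (2 ^ k)⁻¹ = 2⁻¹ := by
          rw [pow_succ]
          field_simp
        rw [intervalIntegral.integral_const_mul, integral_inv h0, neg_div_neg_eq, hratio, log_inv]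
        ring

lemma intervalIntegrable_hilbertIntegrand_neg (n : ℕ) :
    IntervalIntegrable hilbertIntegrand volume (-1) (-(2 ^ n)⁻¹) := by
  simpa using IntervalIntegrable.trans_iterate (a := fun k => -((2 : ℝ) ^ k)⁻¹) (n := n)
    fun k _ => intervalIntegrable_hilbertIntegrand_piece k

lemma integral_hilbertIntegrand_neg_le (n : ℕ) :
    ∫ t in (-1)..(-(2 ^ n)⁻¹), hilbertIntegrand t
      ≤ ∑ k ∈ Finset.range n, phiNode (k + 1) * log 2 := by
  have hsum := intervalIntegral.sum_integral_adjacent_intervals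
    (a := fun k => -((2 : ℝ) ^ k)⁻¹) (n := n)
    fun k _ => intervalIntegrable_hilbertIntegrand_piece k
  simp only [pow_zero, inv_one] at hsum
  rw [← hsum]
  exact Finset.sum_le_sum fun k _ => integral_hilbertIntegrand_piece_le k

lemma zero_notMem_uIcc_inv_two_pow_one (n : ℕ) : (0 : ℝ) ∉ uIcc (2 ^ n)⁻¹ 1 := by
  rw [uIcc_of_le (inv_two_pow_le_one n)]
  exact fun h => lt_irrefl 0 (lt_of_lt_of_le (by positivity) h.1)

lemma eqOn_hilbertIntegrand_pos (n : ℕ) :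
    EqOn hilbertIntegrand (fun t => 1 - t⁻¹) (uIcc (2 ^ n)⁻¹ 1) := by
  intro t ht
  rw [uIcc_of_le (inv_two_pow_le_one n)] at ht
  have ht₀ : 0 < t := lt_of_lt_of_le (by positivity) ht.1
  rw [hilbertIntegrand, phi_eq_of_mem_Icc ⟨ht₀.le, ht.2⟩]
  field_simp [ht₀.ne']
  ring

lemma intervalIntegrable_hilbertIntegrand_pos (n : ℕ) :
    IntervalIntegrable hilbertIntegrand volume (2 ^ n)⁻¹ 1 := by
  have h0 := zero_notMem_uIcc_inv_two_pow_one n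
  refine ContinuousOn.intervalIntegrable (ContinuousOn.congr ?_ (eqOn_hilbertIntegrand_pos n))
  fun_prop (disch := exact fun t ht h => h0 (h ▸ ht))

lemma integral_hilbertIntegrand_pos (n : ℕ) :
    ∫ t in (2 ^ n)⁻¹..1, hilbertIntegrand t = 1 - (2 ^ n)⁻¹ - n * log 2 := by
  have h0 := zero_notMem_uIcc_inv_two_pow_one n
  rw [intervalIntegral.integral_congr (eqOn_hilbertIntegrand_pos n),
    intervalIntegral.integral_sub intervalIntegrable_const
      (intervalIntegral.intervalIntegrable_inv (fun t ht h => h0 (h ▸ ht)) continuousOn_id),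
    integral_inv h0]
  simp [log_pow]

lemma setIntegral_hilbertIntegrand_le (n : ℕ) :
    ∫ t in {t : ℝ | (2 ^ n)⁻¹ < |t|}, hilbertIntegrand t
      ≤ -log 2 * ∑ k ∈ Finset.Icc 1 n, (1 : ℝ) / (k + 1) + 1 := by
  rw [setIntegral_lt_abs_eq_intervalIntegral_add (by positivity) (inv_two_pow_le_one n)
    (fun t ht => by rw [hilbertIntegrand, phi_eq_zero_of_one_lt_abs ht, zero_div])
    (intervalIntegrable_hilbertIntegrand_neg n) (intervalIntegrable_hilbertIntegrand_pos n),
    integral_hilbertIntegrand_pos]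
  have hneg := integral_hilbertIntegrand_neg_le n
  rw [← Finset.sum_mul, sum_range_phiNode_succ] at hneg
  have : (0 : ℝ) < (2 ^ n)⁻¹ := by positivity
  linarith

/-- The maximal Hilbert transform of `φ` at `0` is infinite;
in particular the truncated transform at `ε = 2^{-n}` satisfies
`∫_{|t|>2^{-n}} φ(t)/(0-t) dt ≤ -(log 2) ∑_{k=1}^n 1/(k+1) + 1`, a bound
tending to `-∞`. -/
theorem stmt12 :
    (⨆ (ε : ℝ) (_ : 0 < ε),
        ENNReal.ofReal
          |(1 / π) * ∫ t in {t : ℝ | ε < |t|}, phi t / (0 - t)| ) = ⊤ ∧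
    (∀ n : ℕ,
      (∫ t in {t : ℝ | (2 : ℝ) ^ (-(n : ℝ)) < |t|}, phi t / (0 - t))
        ≤ -(Real.log 2) * ∑ k ∈ Finset.Icc 1 n, (1 : ℝ) / (k + 1) + 1) ∧
    Tendsto (fun n : ℕ =>
        ∫ t in {t : ℝ | (2 : ℝ) ^ (-(n : ℝ)) < |t|}, phi t / (0 - t))
      atTop atBot := by
  simp only [rpow_neg zero_le_two, rpow_natCast]
  have hbound : ∀ n : ℕ, ∫ t in {t : ℝ | (2 ^ n)⁻¹ < |t|}, phi t / (0 - t)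
      ≤ -log 2 * ∑ k ∈ Finset.Icc 1 n, (1 : ℝ) / (k + 1) + 1 :=
    setIntegral_hilbertIntegrand_le
  have htendsto : Tendsto (fun n : ℕ => ∫ t in {t : ℝ | (2 ^ n)⁻¹ < |t|}, phi t / (0 - t))
      atTop atBot :=
    tendsto_atBot_mono hbound <| tendsto_atBot_add_const_right _ _ <|
      tendsto_sum_Icc_one_div_succ_atTop.const_mul_atTop_of_neg
        (neg_neg_of_pos (log_pos one_lt_two))
  exact ⟨iSup_pos_ofReal_abs_eq_top_of_tendsto_atBot (fun n => by positivity)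
    (htendsto.const_mul_atBot (by positivity)), hbound, htendsto⟩
end

section
/- Let E ⊂ [-π, π] be a finite union of intervals and F ⊂ [-π, π] a set with dist(E, F) > 0. Then lim_{m→∞} ∫_{-π}^{π} 𝟙_E(t) · cos(mt) · sign(sin mt)/(x - t) dt = 0, uniformly for x ∈ F. -/
open MeasureTheory Filter Set Real Topology

/-!
Away from the zeros of `sin (m t)`, the function `cos (m t) * sign (sin (m t))` is the derivative
of `|sin (m t)| / m`, which is bounded by `1 / m`. Integrating by parts against `1 / (x - t)` over
an interval at distance at least `d` from `x` bounds the integral by `(2 / d + length / d ^ 2) / m`,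
uniformly in `x`. A finite union of intervals reduces to single intervals through
`∫_{A ∪ B} = ∫_A + ∫_B - ∫_{A ∩ B}`, because an interval meets a union of intervals in a union of
intervals.
-/

noncomputable def oscKernel (m x t : ℝ) : ℝ := cos (m * t) * sign (sin (m * t)) / (x - t)

@[fun_prop]
lemma Real.measurable_sign : Measurable Real.sign :=
  Measurable.ite measurableSet_Iio measurable_const
    (Measurable.ite measurableSet_Ioi measurable_const measurable_const)

lemma Real.abs_sign_le_one (r : ℝ) : |sign r| ≤ 1 := by
  rcases sign_apply_eq r with h | h | h <;> simp [h]

lemma measurable_oscKernel (m x : ℝ) : Measurable (oscKernel m x) := by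
  unfold oscKernel
  fun_prop

lemma abs_oscKernel_le (m x t : ℝ) : |oscKernel m x t| ≤ |x - t|⁻¹ := by
  rw [oscKernel, abs_div, abs_mul, div_eq_mul_inv]
  have := mul_le_one₀ (abs_cos_le_one (m * t)) (abs_nonneg _) (abs_sign_le_one (sin (m * t)))
  exact mul_le_of_le_one_left (by positivity) this

lemma integrableOn_oscKernel {m x d : ℝ} {S : Set ℝ} (hS : MeasurableSet S) (hSfin : volume S ≠ ⊤)
    (hd : 0 < d) (hdist : ∀ t ∈ S, d ≤ |x - t|) : IntegrableOn (oscKernel m x) S := by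
  refine Measure.integrableOn_of_bounded (M := d⁻¹) hSfin
    (measurable_oscKernel m x).aestronglyMeasurable ?_
  filter_upwards [ae_restrict_mem hS] with t ht
  exact (abs_oscKernel_le m x t).trans (inv_anti₀ hd (hdist t ht))

lemma hasDerivAt_abs_sin_mul {m u : ℝ} (hs : sin (m * u) ≠ 0) :
    HasDerivAt (fun u => |sin (m * u)|) (m * (cos (m * u) * sign (sin (m * u)))) u := by
  have hsin : HasDerivAt (fun u => sin (m * u)) (cos (m * u) * m) u := by
    simpa using ((hasDerivAt_id u).const_mul m).sin
  rcases hs.lt_or_gt with hneg | hpos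
  · have h := (hasDerivAt_abs_neg hneg).comp u hsin
    rw [sign_of_neg hneg]
    exact h.congr_deriv (by ring)
  · have h := (hasDerivAt_abs_pos hpos).comp u hsin
    rw [sign_of_pos hpos]
    exact h.congr_deriv (by ring)

lemma hasDerivAt_abs_sin_mul_div {m x u : ℝ} (hm : m ≠ 0) (hxu : x ≠ u) (hs : sin (m * u) ≠ 0) :
    HasDerivAt (fun u => |sin (m * u)| / (m * (x - u)))
      (oscKernel m x u + |sin (m * u)| / (m * (x - u) ^ 2)) u := by
  have hden : HasDerivAt (fun u => m * (x - u)) (-m) u := by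
    simpa using ((hasDerivAt_id u).const_sub x).const_mul m
  have hxu' : x - u ≠ 0 := sub_ne_zero.2 hxu
  have h : HasDerivAt (fun u => |sin (m * u)| / (m * (x - u))) _ u :=
    (hasDerivAt_abs_sin_mul hs).div hden (mul_ne_zero hm hxu')
  convert h using 1
  simp only [oscKernel]
  field_simp
  ring

lemma countable_setOf_sin_mul_eq_zero {m : ℝ} (hm : m ≠ 0) :
    {u : ℝ | sin (m * u) = 0}.Countable := by
  refine (countable_range fun k : ℤ => k * π / m).mono fun u hu => ?_
  obtain ⟨k, hk⟩ := sin_eq_zero_iff.1 hu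
  exact ⟨k, by field_simp; linarith⟩

lemma abs_intervalIntegral_oscKernel_le {m x c e d : ℝ} (hm : 0 < m) (hd : 0 < d) (hce : c ≤ e)
    (hdist : ∀ t ∈ Icc c e, d ≤ |x - t|) :
    |∫ t in c..e, oscKernel m x t| ≤ 2 / (m * d) + (e - c) / (m * d ^ 2) := by
  have hxt : ∀ t ∈ Icc c e, x - t ≠ 0 := fun t ht h => by
    have := hdist t ht
    rw [h, abs_zero] at this
    linarith
  set f : ℝ → ℝ := fun u => |sin (m * u)| / (m * (x - u)) with hf
  set r : ℝ → ℝ := fun u => |sin (m * u)| / (m * (x - u) ^ 2) with hr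
  have hf_le : ∀ t ∈ Icc c e, |f t| ≤ 1 / (m * d) := fun t ht => by
    rw [hf, abs_div, abs_abs, abs_mul, abs_of_pos hm]
    exact div_le_div₀ zero_le_one (abs_sin_le_one _) (by positivity)
      (mul_le_mul_of_nonneg_left (hdist t ht) hm.le)
  have hr_le : ∀ t ∈ Icc c e, ‖r t‖ ≤ 1 / (m * d ^ 2) := fun t ht => by
    rw [hr, norm_div, Real.norm_eq_abs, abs_abs, norm_mul, Real.norm_eq_abs, abs_of_pos hm,
      norm_pow, Real.norm_eq_abs]
    exact div_le_div₀ zero_le_one (abs_sin_le_one _) (by positivity)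
      (mul_le_mul_of_nonneg_left (pow_le_pow_left₀ hd.le (hdist t ht) 2) hm.le)
  have hf_cont : ContinuousOn f (Icc c e) :=
    ContinuousOn.div (by fun_prop) (by fun_prop) fun t ht => mul_ne_zero hm.ne' (hxt t ht)
  have hr_int : IntervalIntegrable r volume c e :=
    (ContinuousOn.div (by fun_prop) (by fun_prop) fun t ht =>
      mul_ne_zero hm.ne' (pow_ne_zero 2 (hxt t ht))).intervalIntegrable_of_Icc hce
  have hK_int : IntervalIntegrable (oscKernel m x) volume c e :=
    (intervalIntegrable_iff_integrableOn_Icc_of_le hce).2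
      (integrableOn_oscKernel measurableSet_Icc measure_Icc_lt_top.ne hd hdist)
  -- The zeros of `sin (m t)`, where `f` need not be differentiable, form a countable set.
  have hftc : ∫ t in c..e, (oscKernel m x t + r t) = f e - f c :=
    integral_eq_of_hasDerivAt_off_countable_of_le f _ hce (countable_setOf_sin_mul_eq_zero hm.ne')
      hf_cont (fun t ht => hasDerivAt_abs_sin_mul_div hm.ne'
        (sub_ne_zero.1 (hxt t (Ioo_subset_Icc_self ht.1))) ht.2) (hK_int.add hr_int)
  rw [intervalIntegral.integral_add hK_int hr_int] at hftc
  have hr_bound : |∫ t in c..e, r t| ≤ 1 / (m * d ^ 2) * (e - c) := by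
    simpa [abs_of_nonneg (sub_nonneg.2 hce)] using
      intervalIntegral.norm_integral_le_of_norm_le_const fun t ht =>
        hr_le t (Ioc_subset_Icc_self (uIoc_of_le hce ▸ ht))
  have hfe := hf_le e (right_mem_Icc.2 hce)
  have hfc := hf_le c (left_mem_Icc.2 hce)
  calc |∫ t in c..e, oscKernel m x t| = |f e - f c - ∫ t in c..e, r t| := by
        rw [← hftc, add_sub_cancel_right]
    _ ≤ |f e| + |f c| + |∫ t in c..e, r t| := by
        linarith [abs_sub (f e - f c) (∫ t in c..e, r t), abs_sub (f e) (f c)]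
    _ ≤ 2 / (m * d) + (e - c) / (m * d ^ 2) := by
        rw [div_mul_eq_mul_div, one_mul] at hr_bound
        have h2 : 2 / (m * d) = 1 / (m * d) + 1 / (m * d) := by ring
        linarith

lemma tendstoUniformlyOn_zero_of_abs_le {ι α : Type*} {l : Filter ι} {f : ι → α → ℝ} {s : Set α}
    {u : ι → ℝ} (hu : Tendsto u l (𝓝 0)) (hf : ∀ᶠ i in l, ∀ x ∈ s, |f i x| ≤ u i) :
    TendstoUniformlyOn f 0 l s := by
  rw [Metric.tendstoUniformlyOn_iff]
  intro ε hε
  filter_upwards [hf, hu.eventually (gt_mem_nhds hε)] with i hi hiε x hx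
  simpa [dist_comm] using (hi x hx).trans_lt hiε

lemma tendstoUniformlyOn_setIntegral_Ioo_oscKernel {F : Set ℝ} {c e d : ℝ} (hd : 0 < d)
    (hdist : ∀ x ∈ F, ∀ t ∈ Ioo c e, d ≤ |x - t|) :
    TendstoUniformlyOn (fun (m : ℕ) x => ∫ t in Ioo c e, oscKernel m x t) 0 atTop F := by
  rcases le_or_gt e c with hec | hce
  · simp only [Ioo_eq_empty_of_le hec, Measure.restrict_empty, integral_zero_measure]
    exact tendsto_const_nhds.tendstoUniformlyOn_const F
  have hdist_Icc : ∀ x ∈ F, Icc c e ⊆ {t | d ≤ |x - t|} := fun x hx => by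
    rw [← closure_Ioo hce.ne]
    exact closure_minimal (hdist x hx) (isClosed_le (by fun_prop) (by fun_prop))
  refine tendstoUniformlyOn_zero_of_abs_le
    (tendsto_const_div_atTop_nhds_zero_nat (2 / d + (e - c) / d ^ 2)) ?_
  filter_upwards [eventually_gt_atTop 0] with m hm x hx
  have hm' : (0 : ℝ) < m := Nat.cast_pos.2 hm
  rw [← integral_Ioc_eq_integral_Ioo, ← intervalIntegral.integral_of_le hce.le]
  refine (abs_intervalIntegral_oscKernel_le hm' hd hce.le (hdist_Icc x hx)).trans_eq ?_
  field_simp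

theorem setIntegral_union_add_setIntegral_inter {X E : Type*} [MeasurableSpace X]
    [NormedAddCommGroup E] [NormedSpace ℝ E] {μ : Measure X} {f : X → E} {A B : Set X}
    (hA : MeasurableSet A) (hfA : IntegrableOn f A μ) (hfB : IntegrableOn f B μ) :
    ∫ x in A ∪ B, f x ∂μ + ∫ x in A ∩ B, f x ∂μ = ∫ x in A, f x ∂μ + ∫ x in B, f x ∂μ := by
  rw [← integral_inter_add_sdiff hA (hfA.union hfB), ← integral_inter_add_sdiff hA hfB,
    union_inter_cancel_left, union_sdiff_left, inter_comm]
  abel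

theorem TendstoUniformlyOn.setIntegral_union {ι α X E : Type*} [MeasurableSpace X]
    [NormedAddCommGroup E] [NormedSpace ℝ E] {μ : Measure X} {l : Filter ι} {s : Set α}
    {f : ι → α → X → E} {A B : Set X} (hA : MeasurableSet A)
    (hfA : ∀ i, ∀ x ∈ s, IntegrableOn (f i x) A μ) (hfB : ∀ i, ∀ x ∈ s, IntegrableOn (f i x) B μ)
    (h_A : TendstoUniformlyOn (fun i x => ∫ t in A, f i x t ∂μ) 0 l s)
    (h_B : TendstoUniformlyOn (fun i x => ∫ t in B, f i x t ∂μ) 0 l s)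
    (h_AB : TendstoUniformlyOn (fun i x => ∫ t in A ∩ B, f i x t ∂μ) 0 l s) :
    TendstoUniformlyOn (fun i x => ∫ t in A ∪ B, f i x t ∂μ) 0 l s := by
  refine (((h_A.add h_B).sub h_AB).congr (Eventually.of_forall fun i x hx => ?_)).congr_right
    fun x _ => by simp
  simp only [Pi.add_apply, Pi.sub_apply]
  rw [← setIntegral_union_add_setIntegral_inter hA (hfA i x hx) (hfB i x hx), add_sub_cancel_right]

lemma tendstoUniformlyOn_setIntegral_biUnion_Ioo_oscKernel {ι : Type*} {F G : Set ℝ} {d : ℝ}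
    (hd : 0 < d) (hdist : ∀ x ∈ F, ∀ t ∈ G, d ≤ |x - t|) (s : Finset ι) (c e : ι → ℝ)
    (hG : ∀ i ∈ s, Ioo (c i) (e i) ⊆ G) :
    TendstoUniformlyOn (fun (m : ℕ) x => ∫ t in ⋃ i ∈ s, Ioo (c i) (e i), oscKernel m x t)
      0 atTop F := by
  classical
  induction s using Finset.induction_on generalizing c e with
  | empty =>
    simp only [Finset.notMem_empty, iUnion_of_empty, iUnion_empty, Measure.restrict_empty,
      integral_zero_measure]
    exact tendsto_const_nhds.tendstoUniformlyOn_const F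
  | insert j s hj ih =>
    have hint : ∀ (m : ℕ), ∀ x ∈ F, ∀ i ∈ insert j s,
        IntegrableOn (oscKernel m x) (Ioo (c i) (e i)) :=
      fun m x hx i hi => integrableOn_oscKernel measurableSet_Ioo measure_Ioo_lt_top.ne hd
        fun t ht => hdist x hx t (hG i hi ht)
    have hinter : Ioo (c j) (e j) ∩ ⋃ i ∈ s, Ioo (c i) (e i)
        = ⋃ i ∈ s, Ioo (c j ⊔ c i) (e j ⊓ e i) := by
      simp only [inter_iUnion₂, Ioo_inter_Ioo]
    simp only [Finset.set_biUnion_insert]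
    refine TendstoUniformlyOn.setIntegral_union measurableSet_Ioo
      (fun m x hx => hint m x hx j (Finset.mem_insert_self j s))
      (fun m x hx => integrableOn_finset_iUnion.2 fun i hi =>
        hint m x hx i (Finset.mem_insert_of_mem hi))
      (tendstoUniformlyOn_setIntegral_Ioo_oscKernel hd fun x hx t ht =>
        hdist x hx t (hG j (Finset.mem_insert_self j s) ht))
      (ih c e fun i hi => hG i (Finset.mem_insert_of_mem hi)) ?_
    rw [hinter]
    exact ih _ _ fun i hi => (Ioo_subset_Ioo le_sup_right inf_le_right).trans
      (hG i (Finset.mem_insert_of_mem hi))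

theorem stmt15_general (n : ℕ) (a b : Fin n → ℝ)
    (E : Set ℝ) (hE : E = ⋃ k, Ioo (a k) (b k))
    (hEsub : E ⊆ Icc (-π) π)
    (F : Set ℝ)
    (d : ℝ) (hd : 0 < d) (hdist : ∀ x ∈ F, ∀ t ∈ E, d ≤ |x - t|) :
    TendstoUniformlyOn
      (fun (m : ℕ) (x : ℝ) =>
        ∫ t in (-π)..π,
          E.indicator 1 t * Real.cos (m * t) * Real.sign (Real.sin (m * t))
            / (x - t))
      (fun _ : ℝ => 0) atTop F := by
  have hE_meas : MeasurableSet E := hE ▸ MeasurableSet.iUnion fun k => measurableSet_Ioo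
  have h_eq : ∀ (m : ℕ) (x : ℝ), ∫ t in (-π)..π,
      E.indicator 1 t * cos (m * t) * sign (sin (m * t)) / (x - t) = ∫ t in E, oscKernel m x t := by
    intro m x
    rw [intervalIntegral.integral_of_le (by linarith [pi_pos]), ← integral_Icc_eq_integral_Ioc]
    conv_rhs => rw [← inter_eq_right.2 hEsub, ← setIntegral_indicator hE_meas]
    congr 1 with t
    by_cases ht : t ∈ E <;> simp [ht, oscKernel, mul_div_assoc]
  simp only [h_eq]
  have h := tendstoUniformlyOn_setIntegral_biUnion_Ioo_oscKernel hd hdist Finset.univ a b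
    fun k _ => hE ▸ subset_iUnion (fun k => Ioo (a k) (b k)) k
  simp only [Finset.mem_univ, iUnion_true, ← hE] at h
  exact h

/-- Let `E ⊂ [-π, π]` be a finite union of intervals and
`F ⊂ [-π, π]` with `dist(E, F) > 0`. Then
`∫_{-π}^{π} 𝟙_E(t) cos(mt) sign(sin mt)/(x - t) dt → 0` as `m → ∞`,
uniformly for `x ∈ F`. -/
theorem stmt15 (n : ℕ) (a b : Fin n → ℝ)
    (E : Set ℝ) (hE : E = ⋃ k, Ioo (a k) (b k))
    (hEsub : E ⊆ Icc (-π) π)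
    (F : Set ℝ) (hFsub : F ⊆ Icc (-π) π)
    (d : ℝ) (hd : 0 < d) (hdist : ∀ x ∈ F, ∀ t ∈ E, d ≤ |x - t|) :
    TendstoUniformlyOn
      (fun (m : ℕ) (x : ℝ) =>
        ∫ t in (-π)..π,
          E.indicator 1 t * Real.cos (m * t) * Real.sign (Real.sin (m * t))
            / (x - t))
      (fun _ : ℝ => 0) atTop F :=
  stmt15_general n a b E hE hEsub F d hd hdist
end
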